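/- arXiv:0706.1614 — 7 statements merged into one kernel-verified Lean document; each statement's English description precedes it below -/
import Mathlib

section
/- Fix a worker n, assume c_1 < c_2 < ... < c_K, and suppose Σ_{k=1}^K C_n/c_k > K and Σ_{k=1}^K c_k/C_n > K. Let m be the unique integer in {1,...,K−1} with c_m/C_n < (m − Σ_{k=1}^m c_k/C_n)/(K − m − Σ_{k=m+1}^K C_n/c_k) < c_{m+1}/C_n, and let Δ = m·(K−m) − (Σ_{p=1}^m c_p)·(Σ_{p=m+1}^K 1/c_p). Define α_k = (W_n/w_k)·((K−m) − Σ_{p=m+1}^K C_n/c_p)/Δ for k ≤ m and α_k = (B_n/b_k)·(m − Σ_{p=1}^m c_p/C_n)/Δ for k > m. Then α_k > 0 for every k, Σ_{k=1}^K α_k·b_k = B_n and Σ_{k=1}^K α_k·w_k = W_n (both the link and the processor are fully utilized), the quantity α_k·b_k is the same for all k > m, and the quantity α_k·w_k is the same for all k ≤ m. -/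
/-!
Write `C = B_n/W_n`, `S = Σ_{p≤m} c_p` and `T = Σ_{p>m} 1/c_p`. The rates make `α_k w_k` equal to
`u = W_n (K - m - C T)/Δ` for `k ≤ m` and `α_k b_k` equal to `v = B_n (m - S/C)/Δ` for `k > m`, so
the link and processor loads are `S u + (K - m) v` and `m u + T v`. This linear system in `(u, v)`
has determinant `-Δ`, and `(u, v)` is its Cramer solution for the right-hand side `(B_n, W_n)`.
For positivity, `Δ = (m - S/C)·C T + m (K - m - C T)`, while the left sandwich inequality
`0 < c_m/C < (m - S/C)/(K - m - C T)` says that the two brackets have the same sign; hence so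
does `Δ`, and `u, v > 0`.
-/

open Finset

lemma div_pos_of_eq_mul_add_mul {A D T M Δ : ℝ} (hAD : 0 < A / D) (hT : 0 ≤ T) (hM : 0 < M)
    (hΔ : Δ = A * T + M * D) : 0 < A / Δ ∧ 0 < D / Δ := by
  subst hΔ
  rcases div_pos_iff.mp hAD with ⟨hA, hD⟩ | ⟨hA, hD⟩
  · have hΔ : 0 < A * T + M * D := by positivity
    exact ⟨div_pos hA hΔ, div_pos hD hΔ⟩
  · have hΔ : A * T + M * D < 0 :=
      add_neg_of_nonpos_of_neg (mul_nonpos_of_nonpos_of_nonneg hA.le hT)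
        (mul_neg_of_pos_of_neg hM hD)
    exact ⟨div_pos_of_neg_of_neg hA hΔ, div_pos_of_neg_of_neg hD hΔ⟩

lemma sum_mul_union_eq_of_mul_eq {ι : Type*} [DecidableEq ι] {s t : Finset ι}
    (hst : Disjoint s t) {α b w : ι → ℝ} {u v : ℝ} (hw : ∀ k ∈ s, w k ≠ 0) (hu : ∀ k ∈ s, α k * w k = u)
    (hv : ∀ k ∈ t, α k * b k = v) :
    ∑ k ∈ s ∪ t, α k * b k = u * ∑ k ∈ s, b k / w k + #t * v := by
  have hs : ∀ k ∈ s, α k * b k = u * (b k / w k) := fun k hk => by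
    rw [← hu k hk]; field_simp [hw k hk]
  rw [sum_union hst, sum_congr rfl hs, sum_congr rfl hv, ← mul_sum, sum_const, nsmul_eq_mul]

lemma Icc_one_union_Icc_succ {m K : ℕ} (h : m ≤ K) : Icc 1 m ∪ Icc (m + 1) K = Icc 1 K := by
  ext; simp only [mem_union, mem_Icc]; omega

lemma disjoint_Icc_Icc_succ (l m K : ℕ) : Disjoint (Icc l m) (Icc (m + 1) K) :=
  disjoint_left.2 fun _ h h' => by simp only [mem_Icc] at h h'; omega

lemma sum_Icc_mul_eq_of_mul_eq {m K : ℕ} (hmK : m ≤ K) {α b w : ℕ → ℝ} {u v : ℝ}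
    (hw : ∀ k ∈ Icc 1 m, w k ≠ 0) (hb : ∀ k ∈ Icc (m + 1) K, b k ≠ 0)
    (hu : ∀ k ∈ Icc 1 m, α k * w k = u) (hv : ∀ k ∈ Icc (m + 1) K, α k * b k = v) :
    ∑ k ∈ Icc 1 K, α k * b k = u * ∑ k ∈ Icc 1 m, b k / w k + (K - m) * v ∧
      ∑ k ∈ Icc 1 K, α k * w k = v * ∑ k ∈ Icc (m + 1) K, w k / b k + m * u := by
  have hcard : (#(Icc (m + 1) K) : ℝ) = K - m := by
    rw [Nat.card_Icc, Nat.add_sub_add_right, Nat.cast_sub hmK]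
  rw [← Icc_one_union_Icc_succ hmK]
  refine ⟨?_, ?_⟩
  · rw [sum_mul_union_eq_of_mul_eq (disjoint_Icc_Icc_succ 1 m K) hw hu hv, hcard]
  · rw [union_comm, sum_mul_union_eq_of_mul_eq (disjoint_Icc_Icc_succ 1 m K).symm hb hv hu]
    simp only [Nat.card_Icc, add_tsub_cancel_right]

lemma rates_pos_of_sandwich {B W S T M R Δ : ℝ} (hB : 0 < B) (hW : 0 < W) (hT : 0 ≤ T) (hM : 0 < M)
    (hsandwich : 0 < (M - S / (B / W)) / (R - B / W * T)) (hΔ : Δ = M * R - S * T) :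
    Δ ≠ 0 ∧ 0 < W * (R - B / W * T) / Δ ∧ 0 < B * (M - S / (B / W)) / Δ := by
  obtain ⟨hA, hD⟩ := div_pos_of_eq_mul_add_mul hsandwich (mul_nonneg (by positivity) hT) hM
    (T := B / W * T) (Δ := Δ) (by rw [hΔ]; field_simp; ring)
  refine ⟨fun h => by simp [h] at hA, ?_, ?_⟩
  · rw [mul_div_assoc]; exact mul_pos hW hD
  · rw [mul_div_assoc]; exact mul_pos hB hA

lemma rates_solve_utilization {B W S T M R Δ : ℝ} (hB : B ≠ 0) (hW : W ≠ 0)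
    (hΔ : Δ = M * R - S * T) (hΔ0 : Δ ≠ 0) :
    W * (R - B / W * T) / Δ * S + R * (B * (M - S / (B / W)) / Δ) = B ∧
      B * (M - S / (B / W)) / Δ * T + M * (W * (R - B / W * T) / Δ) = W := by
  constructor <;> field_simp <;> rw [hΔ] <;> ring

theorem stmt_6_general (K : ℕ) (b w : ℕ → ℝ) (Bn Wn : ℝ)
    (hBn : 0 < Bn) (hWn : 0 < Wn)
    (hb : ∀ k ∈ Finset.Icc 1 K, 0 < b k) (hw : ∀ k ∈ Finset.Icc 1 K, 0 < w k)
    (m : ℕ) (hm : m ∈ Finset.Icc 1 (K - 1))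
    (hml : (b m / w m) / (Bn / Wn) <
      ((m : ℝ) - ∑ k ∈ Finset.Icc 1 m, (b k / w k) / (Bn / Wn)) /
        ((K : ℝ) - (m : ℝ) - ∑ k ∈ Finset.Icc (m + 1) K, (Bn / Wn) / (b k / w k)))
    (Δ : ℝ)
    (hΔ : Δ = (m : ℝ) * ((K : ℝ) - (m : ℝ)) -
      (∑ p ∈ Finset.Icc 1 m, b p / w p) * (∑ p ∈ Finset.Icc (m + 1) K, 1 / (b p / w p)))
    (α : ℕ → ℝ)
    (hα1 : ∀ k ∈ Finset.Icc 1 m, α k =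
      (Wn / w k) * (((K : ℝ) - (m : ℝ)) -
        ∑ p ∈ Finset.Icc (m + 1) K, (Bn / Wn) / (b p / w p)) / Δ)
    (hα2 : ∀ k ∈ Finset.Icc (m + 1) K, α k =
      (Bn / b k) * ((m : ℝ) - ∑ p ∈ Finset.Icc 1 m, (b p / w p) / (Bn / Wn)) / Δ) :
    (∀ k ∈ Finset.Icc 1 K, 0 < α k) ∧
    (∑ k ∈ Finset.Icc 1 K, α k * b k = Bn) ∧
    (∑ k ∈ Finset.Icc 1 K, α k * w k = Wn) ∧
    (∀ k ∈ Finset.Icc (m + 1) K, ∀ j ∈ Finset.Icc (m + 1) K, α k * b k = α j * b j) ∧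
    (∀ k ∈ Finset.Icc 1 m, ∀ j ∈ Finset.Icc 1 m, α k * w k = α j * w j) := by
  obtain ⟨hm1, hmK⟩ : 1 ≤ m ∧ m < K := by simp only [mem_Icc] at hm; omega
  have hlow : Icc 1 m ⊆ Icc 1 K := Icc_subset_Icc_right hmK.le
  have hhigh : Icc (m + 1) K ⊆ Icc 1 K := Icc_subset_Icc_left (by omega)
  simp only [one_div_div] at hΔ
  set C := Bn / Wn
  set S := ∑ p ∈ Icc 1 m, b p / w p
  set T := ∑ p ∈ Icc (m + 1) K, w p / b p
  have hS : ∑ k ∈ Icc 1 m, b k / w k / C = S / C := (sum_div ..).symm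
  have hT : ∑ k ∈ Icc (m + 1) K, C / (b k / w k) = C * T := by
    simp only [T, mul_sum, div_div_eq_mul_div, mul_div_assoc]
  simp only [hS, hT] at hml hα1 hα2
  set u := Wn * (K - m - C * T) / Δ with hu_def
  set v := Bn * (m - S / C) / Δ with hv_def
  have hu : ∀ k ∈ Icc 1 m, α k * w k = u := fun k hk => by
    rw [hα1 k hk, hu_def]; field_simp [(hw k (hlow hk)).ne']
  have hv : ∀ k ∈ Icc (m + 1) K, α k * b k = v := fun k hk => by
    rw [hα2 k hk, hv_def]; field_simp [(hb k (hhigh hk)).ne']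
  have hcm : 0 < b m / w m / C := by
    have hm' := hlow (right_mem_Icc.2 hm1)
    exact div_pos (div_pos (hb m hm') (hw m hm')) (div_pos hBn hWn)
  have hT0 : 0 ≤ T := sum_nonneg fun k hk => (div_pos (hw k (hhigh hk)) (hb k (hhigh hk))).le
  obtain ⟨hΔ0, hu0, hv0⟩ :=
    rates_pos_of_sandwich hBn hWn hT0 (by exact_mod_cast hm1) (hcm.trans hml) hΔ
  obtain ⟨hsum_b, hsum_w⟩ := sum_Icc_mul_eq_of_mul_eq hmK.le (fun k hk => (hw k (hlow hk)).ne')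
    (fun k hk => (hb k (hhigh hk)).ne') hu hv
  have hsol := rates_solve_utilization (R := K - m) hBn.ne' hWn.ne' hΔ hΔ0
  refine ⟨fun k hk => ?_, hsum_b.trans hsol.1, hsum_w.trans hsol.2,
    fun k hk j hj => by rw [hv k hk, hv j hj], fun k hk j hj => by rw [hu k hk, hu j hj]⟩
  rcases le_or_gt k m with hkm | hkm
  · exact pos_of_mul_pos_left (hu k (mem_Icc.2 ⟨(mem_Icc.1 hk).1, hkm⟩) ▸ hu0) (hw k hk).le
  · exact pos_of_mul_pos_left (hv k (mem_Icc.2 ⟨hkm, (mem_Icc.1 hk).2⟩) ▸ hv0) (hb k hk).le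

/-- On a worker `n` with `c_1 < ... < c_K`, `Σ_k C_n/c_k > K` and
`Σ_k c_k/C_n > K`, taking `m` the (unique) integer in `{1,...,K-1}` satisfying the
sandwich condition, `Δ = m(K−m) − (Σ_{p≤m} c_p)(Σ_{p>m} 1/c_p)` and the closed-form
rates `α`, we get: `α_k > 0`, both link and processor are fully utilized,
`α_k·b_k` is constant for `k > m`, and `α_k·w_k` is constant for `k ≤ m`. -/
theorem stmt_6 (K : ℕ) (hK : 2 ≤ K) (b w : ℕ → ℝ) (Bn Wn : ℝ)
    (hBn : 0 < Bn) (hWn : 0 < Wn)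
    (hb : ∀ k ∈ Finset.Icc 1 K, 0 < b k) (hw : ∀ k ∈ Finset.Icc 1 K, 0 < w k)
    (hc : ∀ k, 1 ≤ k → k < K → b k / w k < b (k + 1) / w (k + 1))
    (h1 : (K : ℝ) < ∑ k ∈ Finset.Icc 1 K, (Bn / Wn) / (b k / w k))
    (h2 : (K : ℝ) < ∑ k ∈ Finset.Icc 1 K, (b k / w k) / (Bn / Wn))
    (m : ℕ) (hm : m ∈ Finset.Icc 1 (K - 1))
    (hml : (b m / w m) / (Bn / Wn) <
      ((m : ℝ) - ∑ k ∈ Finset.Icc 1 m, (b k / w k) / (Bn / Wn)) /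
        ((K : ℝ) - (m : ℝ) - ∑ k ∈ Finset.Icc (m + 1) K, (Bn / Wn) / (b k / w k)))
    (hmr : ((m : ℝ) - ∑ k ∈ Finset.Icc 1 m, (b k / w k) / (Bn / Wn)) /
        ((K : ℝ) - (m : ℝ) - ∑ k ∈ Finset.Icc (m + 1) K, (Bn / Wn) / (b k / w k)) <
      (b (m + 1) / w (m + 1)) / (Bn / Wn))
    (Δ : ℝ)
    (hΔ : Δ = (m : ℝ) * ((K : ℝ) - (m : ℝ)) -
      (∑ p ∈ Finset.Icc 1 m, b p / w p) * (∑ p ∈ Finset.Icc (m + 1) K, 1 / (b p / w p)))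
    (α : ℕ → ℝ)
    (hα1 : ∀ k ∈ Finset.Icc 1 m, α k =
      (Wn / w k) * (((K : ℝ) - (m : ℝ)) -
        ∑ p ∈ Finset.Icc (m + 1) K, (Bn / Wn) / (b p / w p)) / Δ)
    (hα2 : ∀ k ∈ Finset.Icc (m + 1) K, α k =
      (Bn / b k) * ((m : ℝ) - ∑ p ∈ Finset.Icc 1 m, (b p / w p) / (Bn / Wn)) / Δ) :
    (∀ k ∈ Finset.Icc 1 K, 0 < α k) ∧
    (∑ k ∈ Finset.Icc 1 K, α k * b k = Bn) ∧
    (∑ k ∈ Finset.Icc 1 K, α k * w k = Wn) ∧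
    (∀ k ∈ Finset.Icc (m + 1) K, ∀ j ∈ Finset.Icc (m + 1) K, α k * b k = α j * b j) ∧
    (∀ k ∈ Finset.Icc 1 m, ∀ j ∈ Finset.Icc 1 m, α k * w k = α j * w j) :=
  stmt_6_general K b w Bn Wn hBn hWn hb hw m hm hml Δ hΔ α hα1 hα2
end

section
/- Fix a worker n, assume c_1 < c_2 < ... < c_K, and suppose Σ_{k=1}^K C_n/c_k > K and Σ_{k=1}^K c_k/C_n > K. Let m and the rates α_k be as given by the closed-form Nash equilibrium on worker n, and define the sequential communication time ratios μ_k = α_k·b_k/B_n and the sequential computation time ratios ν_k = α_k·w_k/W_n. Then μ_1 ≤ μ_2 ≤ ... ≤ μ_m < μ_{m+1} = ... = μ_K, ν_1 = ... = ν_m > ν_{m+1} ≥ ... ≥ ν_K, and Σ_{k=1}^K μ_k = Σ_{k=1}^K ν_k = 1. -/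
/-!
On worker `n`, write `c_k = b_k / w_k` and `C = B_n / W_n`. The closed form makes every
application `k ≤ m` spend the same fraction `x = A / Δ` of the time computing and every
application `k > m` the same fraction `y = M / Δ` of the time communicating, where
`A = (K - m) - Σ_{k>m} C / c_k` and `M = m - Σ_{k≤m} c_k / C`; the remaining ratios are
`μ_k = (c_k / C) x` and `ν_k = (C / c_k) y`. By Cramer's rule, `(x, y)` solves the
linear system `Σμ = 1`, `Σν = 1`. The choice of `m` gives `0 < c_m / C < M / A`, so `A` and
`M` have the same sign, which is also the sign of `Δ = m A + (Σ_{k>m} C / c_k) M`; hence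
`x, y > 0`. The orderings then follow from the monotonicity of `c_k`, and the two jumps at
`m` from `c_m / C < M / A < c_{m+1} / C`, since `y = (M / A) x`.
-/

open Finset

theorem sum_Icc_eq_add_of_split {M : Type*} [AddCommMonoid M] {f g h : ℕ → M} {m K : ℕ}
    (hmK : m ≤ K) (hg : ∀ k ∈ Icc 1 m, f k = g k) (hh : ∀ k ∈ Icc (m + 1) K, f k = h k) :
    ∑ k ∈ Icc 1 K, f k = ∑ k ∈ Icc 1 m, g k + ∑ k ∈ Icc (m + 1) K, h k := by
  rw [← Ico_add_one_right_eq_Icc, ← sum_Ico_consecutive f (by omega : 1 ≤ m + 1)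
    (by omega : m + 1 ≤ K + 1), Ico_add_one_right_eq_Icc, Ico_add_one_right_eq_Icc,
    sum_congr rfl hg, sum_congr rfl hh]

theorem sum_div_mul_sum_div {ι 𝕜 : Type*} [Field 𝕜] {s t : Finset ι} {c : ι → 𝕜} {C : 𝕜}
    (hC : C ≠ 0) :
    (∑ k ∈ s, c k / C) * ∑ k ∈ t, C / c k = (∑ k ∈ s, c k) * ∑ k ∈ t, 1 / c k := by
  simp_rw [div_eq_mul_inv, ← sum_mul, ← mul_sum, one_mul]
  field_simp

theorem cramer_two {𝕜 : Type*} [Field 𝕜] {a b c d : 𝕜} (h : b * c - a * d ≠ 0) :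
    a * ((b - d) / (b * c - a * d)) + b * ((c - a) / (b * c - a * d)) = 1 ∧
    c * ((b - d) / (b * c - a * d)) + d * ((c - a) / (b * c - a * d)) = 1 := by
  constructor <;>
  · rw [mul_div_assoc', mul_div_assoc', ← add_div, div_eq_one_iff_eq h]
    ring

theorem div_pos_of_div_pos_of_eq_add {𝕜 : Type*} [Field 𝕜] [LinearOrder 𝕜]
    [IsStrictOrderedRing 𝕜] {A M D c d : 𝕜} (hc : 0 < c) (hd : 0 < d)
    (hMA : 0 < M / A) (hD : D = c * A + d * M) : 0 < A / D ∧ 0 < M / D := by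
  rcases div_pos_iff.mp hMA with ⟨hM, hA⟩ | ⟨hM, hA⟩
  · have hD₀ : 0 < D := by rw [hD]; positivity
    exact ⟨div_pos hA hD₀, div_pos hM hD₀⟩
  · have hD₀ : D < 0 := by rw [hD]; nlinarith
    exact ⟨div_pos_of_neg_of_neg hA hD₀, div_pos_of_neg_of_neg hM hD₀⟩

/-- `c k / C` stands for `c_k / C_n`: applications `k ≤ m` are computation-bound (common `ν`),
those above are communication-bound (common `μ`). -/
structure IsSplitProfile (K m : ℕ) (c : ℕ → ℝ) (C x y : ℝ) (μ ν : ℕ → ℝ) : Prop where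
  low : ∀ k ∈ Icc 1 m, μ k = c k / C * x ∧ ν k = x
  high : ∀ k ∈ Icc (m + 1) K, μ k = y ∧ ν k = C / c k * y

theorem isSplitProfile_of_rates {K m : ℕ} {α b w μ ν : ℕ → ℝ} {B W X Y D : ℝ}
    (hB : 0 < B) (hW : 0 < W) (hb : ∀ k ∈ Icc 1 K, 0 < b k) (hw : ∀ k ∈ Icc 1 K, 0 < w k)
    (hmK : m ≤ K) (hα₁ : ∀ k ∈ Icc 1 m, α k = W / w k * X / D)
    (hα₂ : ∀ k ∈ Icc (m + 1) K, α k = B / b k * Y / D)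
    (hμ : ∀ k ∈ Icc 1 K, μ k = α k * b k / B) (hν : ∀ k ∈ Icc 1 K, ν k = α k * w k / W) :
    IsSplitProfile K m (fun k => b k / w k) (B / W) (X / D) (Y / D) μ ν where
  low k hk := by
    have hkK : k ∈ Icc 1 K := Icc_subset_Icc_right hmK hk
    have := (hw k hkK).ne'
    rw [hμ k hkK, hν k hkK, hα₁ k hk]
    constructor <;> field_simp
  high k hk := by
    have hkK : k ∈ Icc 1 K := Icc_subset_Icc_left (Nat.le_add_left 1 m) hk
    have := (hb k hkK).ne'
    have := (hw k hkK).ne'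
    rw [hμ k hkK, hν k hkK, hα₂ k hk]
    constructor <;> field_simp

namespace IsSplitProfile

variable {K m : ℕ} {c μ ν : ℕ → ℝ} {C x y r : ℝ}

theorem commRatio_le_succ (hP : IsSplitProfile K m c C x y μ ν) (hC : 0 ≤ C) (hx : 0 ≤ x)
    (hc : ∀ k, 1 ≤ k → k < m → c k ≤ c (k + 1)) :
    ∀ k, 1 ≤ k → k < m → μ k ≤ μ (k + 1) := by
  intro k h1k hkm
  rw [(hP.low k (mem_Icc.mpr ⟨h1k, hkm.le⟩)).1,
    (hP.low (k + 1) (mem_Icc.mpr ⟨by omega, hkm⟩)).1]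
  gcongr ?_ / _ * _
  exact hc k h1k hkm

theorem compRatio_succ_le (hP : IsSplitProfile K m c C x y μ ν) (hC : 0 ≤ C) (hy : 0 ≤ y)
    (hcpos : ∀ k, m + 1 ≤ k → k < K → 0 < c k)
    (hc : ∀ k, m + 1 ≤ k → k < K → c k ≤ c (k + 1)) :
    ∀ k, m + 1 ≤ k → k < K → ν (k + 1) ≤ ν k := by
  intro k hmk hkK
  rw [(hP.high k (mem_Icc.mpr ⟨hmk, hkK.le⟩)).2,
    (hP.high (k + 1) (mem_Icc.mpr ⟨by omega, hkK⟩)).2]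
  gcongr _ / ?_ * _
  · exact hcpos k hmk hkK
  · exact hc k hmk hkK

theorem commRatio_eq_of_mem_high (hP : IsSplitProfile K m c C x y μ ν) :
    ∀ k ∈ Icc (m + 1) K, ∀ j ∈ Icc (m + 1) K, μ k = μ j := fun k hk j hj => by
  rw [(hP.high k hk).1, (hP.high j hj).1]

theorem compRatio_eq_of_mem_low (hP : IsSplitProfile K m c C x y μ ν) :
    ∀ k ∈ Icc 1 m, ∀ j ∈ Icc 1 m, ν k = ν j := fun k hk j hj => by
  rw [(hP.low k hk).2, (hP.low j hj).2]

theorem commRatio_lt_succ (hP : IsSplitProfile K m c C x y μ ν) (hm : 1 ≤ m)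
    (hmK : m + 1 ≤ K) (hx : 0 < x) (hy : y = r * x) (hr : c m / C < r) : μ m < μ (m + 1) := by
  rw [(hP.low m (mem_Icc.mpr ⟨hm, le_rfl⟩)).1,
    (hP.high (m + 1) (mem_Icc.mpr ⟨le_rfl, hmK⟩)).1, hy]
  exact mul_lt_mul_of_pos_right hr hx

theorem compRatio_succ_lt (hP : IsSplitProfile K m c C x y μ ν) (hm : 1 ≤ m)
    (hmK : m + 1 ≤ K) (hC : 0 < C) (hc : 0 < c (m + 1)) (hx : 0 < x) (hy : y = r * x)
    (hr : r < c (m + 1) / C) :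
    ν (m + 1) < ν m := by
  rw [(hP.low m (mem_Icc.mpr ⟨hm, le_rfl⟩)).2,
    (hP.high (m + 1) (mem_Icc.mpr ⟨le_rfl, hmK⟩)).2, hy]
  calc C / c (m + 1) * (r * x) < C / c (m + 1) * (c (m + 1) / C * x) := by gcongr
    _ = x := by rw [← mul_assoc, div_mul_div_cancel₀ hc.ne', div_self hC.ne', one_mul]

theorem sum_commRatio (hP : IsSplitProfile K m c C x y μ ν) (hmK : m ≤ K) :
    ∑ k ∈ Icc 1 K, μ k = (∑ k ∈ Icc 1 m, c k / C) * x + (K - m) * y := by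
  rw [sum_Icc_eq_add_of_split hmK (fun k hk => (hP.low k hk).1)
      (fun k hk => (hP.high k hk).1),
    ← sum_mul, sum_const, Nat.card_Icc, Nat.add_sub_add_right, nsmul_eq_mul, Nat.cast_sub hmK]

theorem sum_compRatio (hP : IsSplitProfile K m c C x y μ ν) (hmK : m ≤ K) :
    ∑ k ∈ Icc 1 K, ν k = m * x + (∑ k ∈ Icc (m + 1) K, C / c k) * y := by
  rw [sum_Icc_eq_add_of_split hmK (fun k hk => (hP.low k hk).2)
      (fun k hk => (hP.high k hk).2),
    ← sum_mul, sum_const, Nat.card_Icc, Nat.add_sub_cancel, nsmul_eq_mul]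

end IsSplitProfile

theorem stmt_8_general (K : ℕ) (b w : ℕ → ℝ) (Bn Wn : ℝ)
    (hBn : 0 < Bn) (hWn : 0 < Wn)
    (hb : ∀ k ∈ Finset.Icc 1 K, 0 < b k) (hw : ∀ k ∈ Finset.Icc 1 K, 0 < w k)
    (hc : ∀ k, 1 ≤ k → k < K → b k / w k < b (k + 1) / w (k + 1))
    (m : ℕ) (hm : m ∈ Finset.Icc 1 (K - 1))
    (hml : (b m / w m) / (Bn / Wn) <
      ((m : ℝ) - ∑ k ∈ Finset.Icc 1 m, (b k / w k) / (Bn / Wn)) /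
        ((K : ℝ) - (m : ℝ) - ∑ k ∈ Finset.Icc (m + 1) K, (Bn / Wn) / (b k / w k)))
    (hmr : ((m : ℝ) - ∑ k ∈ Finset.Icc 1 m, (b k / w k) / (Bn / Wn)) /
        ((K : ℝ) - (m : ℝ) - ∑ k ∈ Finset.Icc (m + 1) K, (Bn / Wn) / (b k / w k)) <
      (b (m + 1) / w (m + 1)) / (Bn / Wn))
    (Δ : ℝ)
    (hΔ : Δ = (m : ℝ) * ((K : ℝ) - (m : ℝ)) -
      (∑ p ∈ Finset.Icc 1 m, b p / w p) * (∑ p ∈ Finset.Icc (m + 1) K, 1 / (b p / w p)))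
    (α : ℕ → ℝ)
    (hα1 : ∀ k ∈ Finset.Icc 1 m, α k =
      (Wn / w k) * (((K : ℝ) - (m : ℝ)) -
        ∑ p ∈ Finset.Icc (m + 1) K, (Bn / Wn) / (b p / w p)) / Δ)
    (hα2 : ∀ k ∈ Finset.Icc (m + 1) K, α k =
      (Bn / b k) * ((m : ℝ) - ∑ p ∈ Finset.Icc 1 m, (b p / w p) / (Bn / Wn)) / Δ)
    (μ ν : ℕ → ℝ)
    (hμ : ∀ k ∈ Finset.Icc 1 K, μ k = α k * b k / Bn)
    (hν : ∀ k ∈ Finset.Icc 1 K, ν k = α k * w k / Wn) :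
    (∀ k, 1 ≤ k → k < m → μ k ≤ μ (k + 1)) ∧
    (μ m < μ (m + 1)) ∧
    (∀ k ∈ Finset.Icc (m + 1) K, ∀ j ∈ Finset.Icc (m + 1) K, μ k = μ j) ∧
    (∀ k ∈ Finset.Icc 1 m, ∀ j ∈ Finset.Icc 1 m, ν k = ν j) ∧
    (ν (m + 1) < ν m) ∧
    (∀ k, m + 1 ≤ k → k < K → ν (k + 1) ≤ ν k) ∧
    (∑ k ∈ Finset.Icc 1 K, μ k = 1) ∧
    (∑ k ∈ Finset.Icc 1 K, ν k = 1) := by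
  obtain ⟨hm1, hmK⟩ : 1 ≤ m ∧ m + 1 ≤ K := by rw [mem_Icc] at hm; omega
  have hC : 0 < Bn / Wn := div_pos hBn hWn
  have hcpos : ∀ k, 1 ≤ k → k ≤ K → 0 < b k / w k := fun k h1k hkK =>
    div_pos (hb k (mem_Icc.mpr ⟨h1k, hkK⟩)) (hw k (mem_Icc.mpr ⟨h1k, hkK⟩))
  have hP := isSplitProfile_of_rates hBn hWn hb hw (by omega) hα1 hα2 hμ hν
  set a := ∑ k ∈ Icc 1 m, b k / w k / (Bn / Wn)
  set d := ∑ k ∈ Icc (m + 1) K, Bn / Wn / (b k / w k)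
  have hd : 0 < d := sum_pos (fun k hk => div_pos hC (hcpos k (by grind) (mem_Icc.mp hk).2))
    (nonempty_Icc.mpr hmK)
  have hΔ' : Δ = (K - m) * m - a * d := by rw [hΔ, sum_div_mul_sum_div hC.ne']; ring
  obtain ⟨hx, hy⟩ : 0 < (K - m - d) / Δ ∧ 0 < (m - a) / Δ :=
    div_pos_of_div_pos_of_eq_add (c := m) (by exact_mod_cast hm1) hd
      ((div_pos (hcpos m hm1 (by omega)) hC).trans hml) (by rw [hΔ']; ring)
  have hyx : (m - a) / Δ = (m - a) / (K - m - d) * ((K - m - d) / Δ) :=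
    (div_mul_div_cancel₀ fun h => by simp [h] at hx).symm
  have hΔ0 : Δ ≠ 0 := by rintro rfl; simp at hx
  obtain ⟨hsumμ, hsumν⟩ := cramer_two (a := a) (b := K - m) (c := m) (d := d) (hΔ' ▸ hΔ0)
  rw [← hΔ'] at hsumμ hsumν
  exact ⟨hP.commRatio_le_succ hC.le hx.le fun k h1k hkm => (hc k h1k (by omega)).le,
    hP.commRatio_lt_succ hm1 hmK hx hyx hml,
    hP.commRatio_eq_of_mem_high, hP.compRatio_eq_of_mem_low,
    hP.compRatio_succ_lt hm1 hmK hC (hcpos (m + 1) (by omega) hmK) hx hyx hmr,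
    hP.compRatio_succ_le hC.le hy.le (fun k hmk hkK => hcpos k (by omega) hkK.le)
      fun k hmk hkK => (hc k (by omega) hkK).le,
    (hP.sum_commRatio (by omega)).trans hsumμ, (hP.sum_compRatio (by omega)).trans hsumν⟩

/-- On a worker `n` in the "continuous" case, with `m` and the
closed-form Nash rates `α`, the sequential communication time ratios
`μ_k = α_k·b_k/B_n` and computation time ratios `ν_k = α_k·w_k/W_n` satisfy
`μ_1 ≤ ... ≤ μ_m < μ_{m+1} = ... = μ_K`, `ν_1 = ... = ν_m > ν_{m+1} ≥ ... ≥ ν_K`,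
and `Σ μ_k = Σ ν_k = 1`. -/
theorem stmt_8 (K : ℕ) (hK : 2 ≤ K) (b w : ℕ → ℝ) (Bn Wn : ℝ)
    (hBn : 0 < Bn) (hWn : 0 < Wn)
    (hb : ∀ k ∈ Finset.Icc 1 K, 0 < b k) (hw : ∀ k ∈ Finset.Icc 1 K, 0 < w k)
    (hc : ∀ k, 1 ≤ k → k < K → b k / w k < b (k + 1) / w (k + 1))
    (h1 : (K : ℝ) < ∑ k ∈ Finset.Icc 1 K, (Bn / Wn) / (b k / w k))
    (h2 : (K : ℝ) < ∑ k ∈ Finset.Icc 1 K, (b k / w k) / (Bn / Wn))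
    (m : ℕ) (hm : m ∈ Finset.Icc 1 (K - 1))
    (hml : (b m / w m) / (Bn / Wn) <
      ((m : ℝ) - ∑ k ∈ Finset.Icc 1 m, (b k / w k) / (Bn / Wn)) /
        ((K : ℝ) - (m : ℝ) - ∑ k ∈ Finset.Icc (m + 1) K, (Bn / Wn) / (b k / w k)))
    (hmr : ((m : ℝ) - ∑ k ∈ Finset.Icc 1 m, (b k / w k) / (Bn / Wn)) /
        ((K : ℝ) - (m : ℝ) - ∑ k ∈ Finset.Icc (m + 1) K, (Bn / Wn) / (b k / w k)) <
      (b (m + 1) / w (m + 1)) / (Bn / Wn))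
    (Δ : ℝ)
    (hΔ : Δ = (m : ℝ) * ((K : ℝ) - (m : ℝ)) -
      (∑ p ∈ Finset.Icc 1 m, b p / w p) * (∑ p ∈ Finset.Icc (m + 1) K, 1 / (b p / w p)))
    (α : ℕ → ℝ)
    (hα1 : ∀ k ∈ Finset.Icc 1 m, α k =
      (Wn / w k) * (((K : ℝ) - (m : ℝ)) -
        ∑ p ∈ Finset.Icc (m + 1) K, (Bn / Wn) / (b p / w p)) / Δ)
    (hα2 : ∀ k ∈ Finset.Icc (m + 1) K, α k =
      (Bn / b k) * ((m : ℝ) - ∑ p ∈ Finset.Icc 1 m, (b p / w p) / (Bn / Wn)) / Δ)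
    (μ ν : ℕ → ℝ)
    (hμ : ∀ k ∈ Finset.Icc 1 K, μ k = α k * b k / Bn)
    (hν : ∀ k ∈ Finset.Icc 1 K, ν k = α k * w k / Wn) :
    (∀ k, 1 ≤ k → k < m → μ k ≤ μ (k + 1)) ∧
    (μ m < μ (m + 1)) ∧
    (∀ k ∈ Finset.Icc (m + 1) K, ∀ j ∈ Finset.Icc (m + 1) K, μ k = μ j) ∧
    (∀ k ∈ Finset.Icc 1 m, ∀ j ∈ Finset.Icc 1 m, ν k = ν j) ∧
    (ν (m + 1) < ν m) ∧
    (∀ k, m + 1 ≤ k → k < K → ν (k + 1) ≤ ν k) ∧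
    (∑ k ∈ Finset.Icc 1 K, μ k = 1) ∧
    (∑ k ∈ Finset.Icc 1 K, ν k = 1) :=
  stmt_8_general K b w Bn Wn hBn hWn hb hw hc m hm hml hmr Δ hΔ α hα1 hα2 μ ν hμ hν
end

section
/- Consider a system S = (K,b,w,N,B,W) with c_1 < c_2 < ... < c_K and define its equivalent subsystem S̃ = (K,b,w,N,B̃,W̃) by: W̃_n = Σ_{k=1}^K B_n/(K·c_k) if Σ_{k=1}^K C_n/c_k ≤ K, and W̃_n = W_n otherwise; B̃_n = Σ_{k=1}^K W_n·c_k/K if Σ_{k=1}^K c_k/C_n ≤ K, and B̃_n = B_n otherwise. Then: (i) S̃ is a subsystem of S, i.e., B̃_n ≤ B_n and W̃_n ≤ W_n for every worker n; and (ii) the Nash-equilibrium rates of S̃ coincide with those of S, i.e., α̃^nc_{n,k} = α^nc_{n,k} for every worker n and application k. -/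
/-- The closed-form Nash-equilibrium rate of application `k` on a worker with
bandwidth `Bn` and computing power `Wn`, for `K` applications with task sizes
`b` and `w` (indexed `1,...,K`), writing `c_k = b_k/w_k` and `C_n = B_n/W_n`:
if `Σ_k C_n/c_k ≤ K` the rate is `B_n/(K·b_k)`; otherwise if `Σ_k c_k/C_n ≤ K`
it is `W_n/(K·w_k)`; otherwise it is given by the two-regime formula determined
by the unique `m ∈ {1,...,K-1}` satisfying the sandwich condition. -/
noncomputable def nashRate (K : ℕ) (b w : ℕ → ℝ) (Bn Wn : ℝ) (k : ℕ) : ℝ :=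
  if (∑ j ∈ Finset.Icc 1 K, (Bn / Wn) / (b j / w j)) ≤ (K : ℝ) then
    Bn / (K * b k)
  else if (∑ j ∈ Finset.Icc 1 K, (b j / w j) / (Bn / Wn)) ≤ (K : ℝ) then
    Wn / (K * w k)
  else if h : ∃ m, m ∈ Finset.Icc 1 (K - 1) ∧
      (b m / w m) / (Bn / Wn) <
        ((m : ℝ) - ∑ j ∈ Finset.Icc 1 m, (b j / w j) / (Bn / Wn)) /
          ((K : ℝ) - (m : ℝ) - ∑ j ∈ Finset.Icc (m + 1) K, (Bn / Wn) / (b j / w j)) ∧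
      ((m : ℝ) - ∑ j ∈ Finset.Icc 1 m, (b j / w j) / (Bn / Wn)) /
          ((K : ℝ) - (m : ℝ) - ∑ j ∈ Finset.Icc (m + 1) K, (Bn / Wn) / (b j / w j)) <
        (b (m + 1) / w (m + 1)) / (Bn / Wn) then
    let m := h.choose
    let Δ : ℝ := (m : ℝ) * ((K : ℝ) - (m : ℝ)) -
      (∑ p ∈ Finset.Icc 1 m, b p / w p) * (∑ p ∈ Finset.Icc (m + 1) K, 1 / (b p / w p))
    if k ≤ m then
      (Wn / w k) * (((K : ℝ) - (m : ℝ)) -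
        ∑ p ∈ Finset.Icc (m + 1) K, (Bn / Wn) / (b p / w p)) / Δ
    else
      (Bn / b k) * ((m : ℝ) - ∑ p ∈ Finset.Icc 1 m, (b p / w p) / (Bn / Wn)) / Δ
  else 0

/-- A throughput vector `α` is feasible for the system `(K,b,w,N,B,W)` if it can be
decomposed into per-worker rates `A n k ≥ 0` respecting every worker's communication
and computation constraints. -/
def Feasible (N K : ℕ) (B W b w : ℕ → ℝ) (α : ℕ → ℝ) : Prop :=
  (∀ k ∈ Finset.Icc 1 K, 0 ≤ α k) ∧
  ∃ A : ℕ → ℕ → ℝ,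
    (∀ n ∈ Finset.Icc 1 N, ∀ k ∈ Finset.Icc 1 K, 0 ≤ A n k) ∧
    (∀ k ∈ Finset.Icc 1 K, α k = ∑ n ∈ Finset.Icc 1 N, A n k) ∧
    (∀ n ∈ Finset.Icc 1 N, ∑ k ∈ Finset.Icc 1 K, A n k * w k ≤ W n) ∧
    (∀ n ∈ Finset.Icc 1 N, ∑ k ∈ Finset.Icc 1 K, A n k * b k ≤ B n)

/-- The computing power of worker `n` in the equivalent subsystem:
`W̃_n = Σ_k B_n/(K·c_k)` if `Σ_k C_n/c_k ≤ K` (i.e. `𝒲_n = ∅`), else `W_n`. -/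
noncomputable def tildeW (K : ℕ) (b w : ℕ → ℝ) (Bn Wn : ℝ) : ℝ :=
  if (∑ k ∈ Finset.Icc 1 K, (Bn / Wn) / (b k / w k)) ≤ (K : ℝ) then
    ∑ k ∈ Finset.Icc 1 K, Bn / (K * (b k / w k))
  else Wn

/-- The bandwidth of worker `n` in the equivalent subsystem:
`B̃_n = Σ_k W_n·c_k/K` if `Σ_k c_k/C_n ≤ K` (i.e. `ℬ_n = ∅`), else `B_n`. -/
noncomputable def tildeB (K : ℕ) (b w : ℕ → ℝ) (Bn Wn : ℝ) : ℝ :=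
  if (∑ k ∈ Finset.Icc 1 K, (b k / w k) / (Bn / Wn)) ≤ (K : ℝ) then
    ∑ k ∈ Finset.Icc 1 K, Wn * (b k / w k) / K
  else Bn


/-!
Write `C = B_n / W_n`. The two regime sums `Σ_k C / c_k` and `Σ_k c_k / C` multiply to
`(Σ_k c_k) (Σ_k 1 / c_k) ≥ K²` (Cauchy–Schwarz), strictly when `K ≥ 2` because the `c_k`
are distinct. So both sums are `≤ K` only when both equal `K`, and then `S̃ = S` on that worker.
If `Σ_k C / c_k ≤ K`, replacing `W_n` by `W̃_n` raises `C` exactly until this sum equals `K`,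
so the worker stays in the first regime, whose rates `B_n / (K b_k)` do not involve `W_n`.
Symmetrically, if only `Σ_k c_k / C ≤ K`, replacing `B_n` by `B̃_n` makes that sum equal `K`,
and the other sum then exceeds `K` by the strict inequality (for `K = 1` directly), so the
rates stay `W_n / (K w_k)`.
-/

open Finset

theorem sq_card_le_sum_mul_sum_inv {ι : Type*} {s : Finset ι} {c : ι → ℝ}
    (hc : ∀ i ∈ s, 0 < c i) : (#s : ℝ) ^ 2 ≤ (∑ i ∈ s, c i) * ∑ i ∈ s, (c i)⁻¹ := by
  have h := sum_sq_le_sum_mul_sum_of_sq_le_mul s (r := fun _ => (1 : ℝ))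
    (fun i hi => (hc i hi).le) (fun i hi => (inv_pos.2 (hc i hi)).le)
    (fun i hi => by rw [mul_inv_cancel₀ (hc i hi).ne', one_pow])
  simpa using h

theorem sq_card_lt_sum_mul_sum_inv {ι : Type*} {s : Finset ι} {c : ι → ℝ}
    (hc : ∀ i ∈ s, 0 < c i) {i j : ι} (hi : i ∈ s) (hj : j ∈ s) (hij : c i ≠ c j) :
    (#s : ℝ) ^ 2 < (∑ i ∈ s, c i) * ∑ i ∈ s, (c i)⁻¹ := by
  have hgap : ∀ x y : ℝ, 0 < x → 0 < y → x / y + y / x - 2 = (x - y) ^ 2 / (x * y) := by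
    intro x y hx hy
    field_simp
    ring
  have hdouble : 2 * ((∑ i ∈ s, c i) * ∑ i ∈ s, (c i)⁻¹ - (#s : ℝ) ^ 2) =
      ∑ k ∈ s, ∑ l ∈ s, (c k / c l + c l / c k - 2) := by
    simp only [sum_sub_distrib, sum_add_distrib, sum_const, nsmul_eq_mul, div_eq_mul_inv,
      ← sum_mul_sum]
    rw [sum_comm (f := fun k l => c l * (c k)⁻¹), ← sum_mul_sum]
    ring
  have hterm : ∀ k ∈ s, ∀ l ∈ s, 0 ≤ c k / c l + c l / c k - 2 := fun k hk l hl => by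
    rw [hgap _ _ (hc k hk) (hc l hl)]
    exact div_nonneg (sq_nonneg _) (mul_pos (hc k hk) (hc l hl)).le
  have hij_pos : 0 < c i / c j + c j / c i - 2 := by
    rw [hgap _ _ (hc i hi) (hc j hj)]
    exact div_pos (sq_pos_of_ne_zero (sub_ne_zero.2 hij)) (mul_pos (hc i hi) (hc j hj))
  have hpos : 0 < ∑ k ∈ s, ∑ l ∈ s, (c k / c l + c l / c k - 2) :=
    sum_pos' (fun k hk => sum_nonneg (hterm k hk))
      ⟨i, hi, sum_pos' (hterm i hi) ⟨j, hj, hij_pos⟩⟩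
  linarith

/-- At `C = B_n / W_n` these are the sums `Σ_k C_n / c_k` and `Σ_k c_k / C_n` whose comparison
with `K` selects the regime in `nashRate`, `tildeW` and `tildeB`. -/
noncomputable def ratioSum (K : ℕ) (b w : ℕ → ℝ) (C : ℝ) : ℝ :=
  ∑ j ∈ Icc 1 K, C / (b j / w j)

noncomputable def invRatioSum (K : ℕ) (b w : ℕ → ℝ) (C : ℝ) : ℝ :=
  ∑ j ∈ Icc 1 K, (b j / w j) / C

section Worker

variable {K : ℕ} {b w : ℕ → ℝ} {Bn Wn : ℝ}

theorem ratioSum_eq (C : ℝ) :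
    ratioSum K b w C = C * ∑ j ∈ Icc 1 K, (b j / w j)⁻¹ := by
  rw [ratioSum, mul_sum]
  exact sum_congr rfl fun _ _ => div_eq_mul_inv _ _

theorem invRatioSum_eq (C : ℝ) :
    invRatioSum K b w C = (∑ j ∈ Icc 1 K, b j / w j) / C :=
  (sum_div _ _ _).symm

theorem ratioSum_mul_invRatioSum {C : ℝ} (hC : C ≠ 0) :
    ratioSum K b w C * invRatioSum K b w C =
      (∑ j ∈ Icc 1 K, b j / w j) * ∑ j ∈ Icc 1 K, (b j / w j)⁻¹ := by
  rw [ratioSum_eq, invRatioSum_eq]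
  field_simp

theorem invRatioSum_nonneg (hc : ∀ k ∈ Icc 1 K, 0 < b k / w k) {C : ℝ} (hC : 0 ≤ C) :
    0 ≤ invRatioSum K b w C :=
  sum_nonneg fun k hk => div_nonneg (hc k hk).le hC

theorem nashRate_of_ratioSum_le (k : ℕ) (h : ratioSum K b w (Bn / Wn) ≤ K) :
    nashRate K b w Bn Wn k = Bn / (K * b k) :=
  if_pos h

theorem nashRate_of_invRatioSum_le (k : ℕ) (h₁ : ¬ ratioSum K b w (Bn / Wn) ≤ K)
    (h₂ : invRatioSum K b w (Bn / Wn) ≤ K) :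
    nashRate K b w Bn Wn k = Wn / (K * w k) :=
  (if_neg h₁).trans (if_pos h₂)

theorem sq_le_ratioSum_mul_invRatioSum (hc : ∀ k ∈ Icc 1 K, 0 < b k / w k) {C : ℝ}
    (hC : C ≠ 0) : (K : ℝ) ^ 2 ≤ ratioSum K b w C * invRatioSum K b w C := by
  rw [ratioSum_mul_invRatioSum hC]
  simpa using sq_card_le_sum_mul_sum_inv hc

theorem sq_lt_ratioSum_mul_invRatioSum (hK : 2 ≤ K) (hc : ∀ k ∈ Icc 1 K, 0 < b k / w k)
    (hmono : ∀ k, 1 ≤ k → k < K → b k / w k < b (k + 1) / w (k + 1)) {C : ℝ} (hC : C ≠ 0) :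
    (K : ℝ) ^ 2 < ratioSum K b w C * invRatioSum K b w C := by
  rw [ratioSum_mul_invRatioSum hC]
  have h1 : 1 ∈ Icc 1 K := by simp; omega
  have h2 : 2 ∈ Icc 1 K := by simp; omega
  simpa using sq_card_lt_sum_mul_sum_inv hc h1 h2 (hmono 1 le_rfl hK).ne

theorem tildeW_of_ratioSum_le (hWn : Wn ≠ 0) (h : ratioSum K b w (Bn / Wn) ≤ K) :
    tildeW K b w Bn Wn = Wn * ratioSum K b w (Bn / Wn) / K := by
  rw [show tildeW K b w Bn Wn = _ from if_pos h, ratioSum, mul_sum, sum_div]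
  exact sum_congr rfl fun k _ => by field_simp

theorem tildeB_of_invRatioSum_le (hBn : Bn ≠ 0) (h : invRatioSum K b w (Bn / Wn) ≤ K) :
    tildeB K b w Bn Wn = Bn * invRatioSum K b w (Bn / Wn) / K := by
  rw [show tildeB K b w Bn Wn = _ from if_pos h, invRatioSum, mul_sum, sum_div]
  exact sum_congr rfl fun k _ => by field_simp

theorem tildeW_le (hK : 0 < K) (hWn : 0 < Wn) : tildeW K b w Bn Wn ≤ Wn := by
  by_cases h : ratioSum K b w (Bn / Wn) ≤ K
  · rw [tildeW_of_ratioSum_le hWn.ne' h, div_le_iff₀ (by positivity)]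
    exact mul_le_mul_of_nonneg_left h hWn.le
  · exact (if_neg h).le

theorem tildeB_le (hK : 0 < K) (hBn : 0 < Bn) : tildeB K b w Bn Wn ≤ Bn := by
  by_cases h : invRatioSum K b w (Bn / Wn) ≤ K
  · rw [tildeB_of_invRatioSum_le hBn.ne' h, div_le_iff₀ (by positivity)]
    exact mul_le_mul_of_nonneg_left h hBn.le
  · exact (if_neg h).le

theorem tildeB_eq_of_ratioSum_le (hK : 0 < K) (hc : ∀ k ∈ Icc 1 K, 0 < b k / w k)
    (hBn : 0 < Bn) (hWn : 0 < Wn) (h₁ : ratioSum K b w (Bn / Wn) ≤ K) :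
    tildeB K b w Bn Wn = Bn := by
  by_cases h₂ : invRatioSum K b w (Bn / Wn) ≤ K
  · have hC : 0 < Bn / Wn := div_pos hBn hWn
    have hprod := sq_le_ratioSum_mul_invRatioSum (K := K) (b := b) (w := w) hc hC.ne'
    have hbound := mul_le_mul_of_nonneg_right h₁ (invRatioSum_nonneg hc hC.le)
    have hKpos : (0 : ℝ) < K := Nat.cast_pos.2 hK
    have hS₂ : invRatioSum K b w (Bn / Wn) = K := by nlinarith
    rw [tildeB_of_invRatioSum_le hBn.ne' h₂, hS₂]
    field_simp
  · exact if_neg h₂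

theorem nashRate_tilde_of_ratioSum_le (hK : 0 < K) (hc : ∀ k ∈ Icc 1 K, 0 < b k / w k)
    (hBn : 0 < Bn) (hWn : 0 < Wn) (h₁ : ratioSum K b w (Bn / Wn) ≤ K) (k : ℕ) :
    nashRate K b w (tildeB K b w Bn Wn) (tildeW K b w Bn Wn) k = nashRate K b w Bn Wn k := by
  have hP : 0 < ∑ j ∈ Icc 1 K, (b j / w j)⁻¹ :=
    sum_pos (fun j hj => inv_pos.2 (hc j hj)) (nonempty_Icc.2 hK)
  rw [tildeB_eq_of_ratioSum_le hK hc hBn hWn h₁, tildeW_of_ratioSum_le hWn.ne' h₁,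
    nashRate_of_ratioSum_le k h₁]
  refine nashRate_of_ratioSum_le k (le_of_eq ?_)
  simp only [ratioSum_eq]
  set P := ∑ j ∈ Icc 1 K, (b j / w j)⁻¹
  field_simp

theorem nashRate_tilde_of_invRatioSum_le (hK : 0 < K) (hc : ∀ k ∈ Icc 1 K, 0 < b k / w k)
    (hmono : ∀ k, 1 ≤ k → k < K → b k / w k < b (k + 1) / w (k + 1))
    (hBn : 0 < Bn) (hWn : 0 < Wn) (h₁ : ¬ ratioSum K b w (Bn / Wn) ≤ K)
    (h₂ : invRatioSum K b w (Bn / Wn) ≤ K) {k : ℕ} (hk : k ∈ Icc 1 K) :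
    nashRate K b w (tildeB K b w Bn Wn) (tildeW K b w Bn Wn) k = nashRate K b w Bn Wn k := by
  have hQ : 0 < ∑ j ∈ Icc 1 K, b j / w j := sum_pos hc (nonempty_Icc.2 hK)
  have htildeB : tildeB K b w Bn Wn = Wn * (∑ j ∈ Icc 1 K, b j / w j) / K := by
    rw [tildeB_of_invRatioSum_le hBn.ne' h₂, invRatioSum_eq]
    field_simp
  have hK' : (0 : ℝ) < K := Nat.cast_pos.2 hK
  have hC : 0 < tildeB K b w Bn Wn / Wn := by rw [htildeB]; positivity
  have hS₂ : invRatioSum K b w (tildeB K b w Bn Wn / Wn) = K := by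
    rw [invRatioSum_eq, htildeB]
    field_simp
  rw [show tildeW K b w Bn Wn = Wn from if_neg h₁, nashRate_of_invRatioSum_le k h₁ h₂]
  by_cases h₁' : ratioSum K b w (tildeB K b w Bn Wn / Wn) ≤ K
  · obtain rfl : K = 1 := by
      by_contra hK1
      have := sq_lt_ratioSum_mul_invRatioSum (by omega) hc hmono hC.ne'
      rw [hS₂] at this
      nlinarith
    obtain rfl : k = 1 := by simpa using hk
    rw [nashRate_of_ratioSum_le 1 h₁', htildeB]
    obtain ⟨hb₁, hw₁⟩ := div_ne_zero_iff.1 (hc 1 (by simp)).ne'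
    simp only [Icc_self, sum_singleton, Nat.cast_one, div_one, one_mul]
    field_simp
  · exact nashRate_of_invRatioSum_le k h₁' hS₂.le

theorem nashRate_tildeB_tildeW (hK : 0 < K) (hc : ∀ k ∈ Icc 1 K, 0 < b k / w k)
    (hmono : ∀ k, 1 ≤ k → k < K → b k / w k < b (k + 1) / w (k + 1))
    (hBn : 0 < Bn) (hWn : 0 < Wn) {k : ℕ} (hk : k ∈ Icc 1 K) :
    nashRate K b w (tildeB K b w Bn Wn) (tildeW K b w Bn Wn) k = nashRate K b w Bn Wn k := by
  by_cases h₁ : ratioSum K b w (Bn / Wn) ≤ K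
  · exact nashRate_tilde_of_ratioSum_le hK hc hBn hWn h₁ k
  by_cases h₂ : invRatioSum K b w (Bn / Wn) ≤ K
  · exact nashRate_tilde_of_invRatioSum_le hK hc hmono hBn hWn h₁ h₂ hk
  rw [show tildeB K b w Bn Wn = Bn from if_neg h₂, show tildeW K b w Bn Wn = Wn from if_neg h₁]

end Worker

/-- The equivalent subsystem `S̃ = (K,b,w,N,B̃,W̃)` of a system
`S = (K,b,w,N,B,W)` with `c_1 < ... < c_K` satisfies: (i) `B̃_n ≤ B_n` and
`W̃_n ≤ W_n` for every worker `n`, and (ii) its Nash-equilibrium rates coincide with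
those of `S` on every worker and for every application. -/
theorem stmt_12 (N K : ℕ) (hK : 1 ≤ K) (B W b w : ℕ → ℝ)
    (hB : ∀ n ∈ Finset.Icc 1 N, 0 < B n) (hW : ∀ n ∈ Finset.Icc 1 N, 0 < W n)
    (hb : ∀ k ∈ Finset.Icc 1 K, 0 < b k) (hw : ∀ k ∈ Finset.Icc 1 K, 0 < w k)
    (hc : ∀ k, 1 ≤ k → k < K → b k / w k < b (k + 1) / w (k + 1)) :
    (∀ n ∈ Finset.Icc 1 N,
      tildeB K b w (B n) (W n) ≤ B n ∧ tildeW K b w (B n) (W n) ≤ W n) ∧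
    (∀ n ∈ Finset.Icc 1 N, ∀ k ∈ Finset.Icc 1 K,
      nashRate K b w (tildeB K b w (B n) (W n)) (tildeW K b w (B n) (W n)) k =
        nashRate K b w (B n) (W n) k) := by
  have hc_pos : ∀ k ∈ Icc 1 K, 0 < b k / w k := fun k hk => div_pos (hb k hk) (hw k hk)
  exact ⟨fun n hn => ⟨tildeB_le hK (hB n hn), tildeW_le hK (hW n hn)⟩,
    fun n hn k hk => nashRate_tildeB_tildeW hK hc_pos hc (hB n hn) (hW n hn) hk⟩
end

section
/- Consider two systems S = (K,b,w,N,B,W) and S' = (K,b,w,N,B',W') with the same applications and workers, such that B'_n ≥ B_n and W'_n ≥ W_n for every worker n. Let S̃ = (K,b,w,N,B̃,W̃) and S̃' = (K,b,w,N,B̃',W̃') be their respective equivalent subsystems. Then B̃'_n ≥ B̃_n and W̃'_n ≥ W̃_n for every worker n. -/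
/-!
For a positive resource, the test in each defining `if` compares one sum `X` divided once by the
resource and once by `K`, so `tildeB = min (W·Σc/K) B` and `tildeW = min (B·Σ1/c / K) W`.
Both arguments of each `min` are monotone in `B` and `W` because every `c_k` is nonnegative.
-/

open Finset

section EquivalentSubsystem

variable {K : ℕ} {b w : ℕ → ℝ}

theorem ite_div_le_eq_min {x y K : ℝ} (hy : 0 < y) (hK : 0 < K) :
    (if x / y ≤ K then x / K else y) = min (x / K) y := by
  simp only [div_le_comm₀ hy hK, min_def]

theorem tildeB_eq_min {Bn Wn : ℝ} (hBn : 0 < Bn) :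
    tildeB K b w Bn Wn = min (∑ k ∈ Icc 1 K, Wn * (b k / w k) / K) Bn := by
  rcases K.eq_zero_or_pos with rfl | hK
  · simp [tildeB, hBn.le]
  have hsum : ∑ k ∈ Icc 1 K, b k / w k / (Bn / Wn) = (∑ k ∈ Icc 1 K, Wn * (b k / w k)) / Bn := by
    rw [sum_div]
    exact sum_congr rfl fun k _ => by rw [div_div_eq_mul_div, mul_comm]
  rw [tildeB, hsum, ← sum_div, ite_div_le_eq_min hBn (by exact_mod_cast hK)]

theorem tildeW_eq_min {Bn Wn : ℝ} (hWn : 0 < Wn) :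
    tildeW K b w Bn Wn = min (∑ k ∈ Icc 1 K, Bn / (K * (b k / w k))) Wn := by
  rcases K.eq_zero_or_pos with rfl | hK
  · simp [tildeW, hWn.le]
  have hsum : ∑ k ∈ Icc 1 K, Bn / Wn / (b k / w k) = (∑ k ∈ Icc 1 K, Bn / (b k / w k)) / Wn := by
    rw [sum_div]
    exact sum_congr rfl fun k _ => div_right_comm ..
  have hsum' : ∑ k ∈ Icc 1 K, Bn / (K * (b k / w k)) = (∑ k ∈ Icc 1 K, Bn / (b k / w k)) / K := by
    rw [sum_div]
    exact sum_congr rfl fun k _ => by rw [div_div, mul_comm]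
  rw [tildeW, hsum, hsum', ite_div_le_eq_min hWn (by exact_mod_cast hK)]

variable {B W B' W' : ℝ}

theorem tildeB_mono (hc : ∀ k ∈ Icc 1 K, 0 ≤ b k / w k) (hB : 0 < B)
    (hBB : B ≤ B') (hWW : W ≤ W') :
    tildeB K b w B W ≤ tildeB K b w B' W' := by
  rw [tildeB_eq_min hB, tildeB_eq_min (hB.trans_le hBB)]
  refine min_le_min (sum_le_sum fun k hk => ?_) hBB
  have := hc k hk
  gcongr

theorem tildeW_mono (hc : ∀ k ∈ Icc 1 K, 0 ≤ b k / w k) (hW : 0 < W)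
    (hBB : B ≤ B') (hWW : W ≤ W') :
    tildeW K b w B W ≤ tildeW K b w B' W' := by
  rw [tildeW_eq_min hW, tildeW_eq_min (hW.trans_le hWW)]
  refine min_le_min (sum_le_sum fun k hk => ?_) hWW
  have := hc k hk
  gcongr

end EquivalentSubsystem

theorem stmt_14_general (N K : ℕ) (B W B' W' b w : ℕ → ℝ)
    (hB : ∀ n ∈ Finset.Icc 1 N, 0 < B n) (hW : ∀ n ∈ Finset.Icc 1 N, 0 < W n)
    (hb : ∀ k ∈ Finset.Icc 1 K, 0 < b k) (hw : ∀ k ∈ Finset.Icc 1 K, 0 < w k)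
    (hBB : ∀ n ∈ Finset.Icc 1 N, B n ≤ B' n)
    (hWW : ∀ n ∈ Finset.Icc 1 N, W n ≤ W' n) :
    ∀ n ∈ Finset.Icc 1 N,
      tildeB K b w (B n) (W n) ≤ tildeB K b w (B' n) (W' n) ∧
      tildeW K b w (B n) (W n) ≤ tildeW K b w (B' n) (W' n) := by
  intro n hn
  have hc : ∀ k ∈ Icc 1 K, 0 ≤ b k / w k := fun k hk => (div_pos (hb k hk) (hw k hk)).le
  exact ⟨tildeB_mono hc (hB n hn) (hBB n hn) (hWW n hn),
    tildeW_mono hc (hW n hn) (hBB n hn) (hWW n hn)⟩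

/-- If `S' = (K,b,w,N,B',W')` has more resources than
`S = (K,b,w,N,B,W)` (`B'_n ≥ B_n`, `W'_n ≥ W_n` for every worker), then the
equivalent subsystems satisfy `B̃'_n ≥ B̃_n` and `W̃'_n ≥ W̃_n` for every worker. -/
theorem stmt_14 (N K : ℕ) (hK : 1 ≤ K) (B W B' W' b w : ℕ → ℝ)
    (hB : ∀ n ∈ Finset.Icc 1 N, 0 < B n) (hW : ∀ n ∈ Finset.Icc 1 N, 0 < W n)
    (hB' : ∀ n ∈ Finset.Icc 1 N, 0 < B' n) (hW' : ∀ n ∈ Finset.Icc 1 N, 0 < W' n)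
    (hb : ∀ k ∈ Finset.Icc 1 K, 0 < b k) (hw : ∀ k ∈ Finset.Icc 1 K, 0 < w k)
    (hBB : ∀ n ∈ Finset.Icc 1 N, B n ≤ B' n)
    (hWW : ∀ n ∈ Finset.Icc 1 N, W n ≤ W' n) :
    ∀ n ∈ Finset.Icc 1 N,
      tildeB K b w (B n) (W n) ≤ tildeB K b w (B' n) (W' n) ∧
      tildeW K b w (B n) (W n) ≤ tildeW K b w (B' n) (W' n) :=
  stmt_14_general N K B W B' W' b w hB hW hb hw hBB hWW
end

section
/- Consider the system with N = 2 workers and K = 2 applications given by B_1 = 1, W_1 = 2, B_2 = 2, W_2 = 1, b_1 = 1, w_1 = 2, b_2 = 2, w_2 = 1. The Nash-equilibrium throughputs given by the closed-form formulas are α^nc_1 = α^nc_2 = 3/4, while the throughput vector (1, 1) is feasible (achieved by processing application 1 exclusively on worker 1 and application 2 exclusively on worker 2). In particular, (1,1) is strictly Pareto-superior to the Nash equilibrium, so the Nash equilibrium of this system is not Pareto optimal. -/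
/-!
Worker 1 (`C_1 = 1/2`) is in the bandwidth-bound regime, `Σ_k C_1/c_k = 5/4 ≤ 2`, and worker 2
(`C_2 = 2`) in the computation-bound one, `Σ_k c_k/C_2 = 5/4 ≤ 2`; each therefore splits its
capacity evenly, giving every application `1/2 + 1/4 = 3/4`. Sending application `k` only to
worker `k` instead saturates both resources of both workers and yields throughput `1` each.
-/

open Finset

theorem nashRate_of_comm_bound {K : ℕ} {b w : ℕ → ℝ} {Bn Wn : ℝ}
    (h : ∑ j ∈ Icc 1 K, (Bn / Wn) / (b j / w j) ≤ K) (k : ℕ) :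
    nashRate K b w Bn Wn k = Bn / (K * b k) := by
  rw [nashRate, if_pos h]

theorem nashRate_of_comp_bound {K : ℕ} {b w : ℕ → ℝ} {Bn Wn : ℝ}
    (hcomm : ¬ ∑ j ∈ Icc 1 K, (Bn / Wn) / (b j / w j) ≤ K)
    (h : ∑ j ∈ Icc 1 K, (b j / w j) / (Bn / Wn) ≤ K) (k : ℕ) :
    nashRate K b w Bn Wn k = Wn / (K * w k) := by
  rw [nashRate, if_neg hcomm, if_pos h]

theorem feasible_of_fits_own_worker {K : ℕ} {B W b w α : ℕ → ℝ}
    (hα : ∀ k ∈ Icc 1 K, 0 ≤ α k) (hw : ∀ k ∈ Icc 1 K, α k * w k ≤ W k)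
    (hb : ∀ k ∈ Icc 1 K, α k * b k ≤ B k) :
    Feasible K K B W b w α := by
  refine ⟨hα, fun n k => if n = k then α k else 0, ?_, ?_, ?_, ?_⟩
  · intro n _ k hk
    dsimp only
    split_ifs
    exacts [hα k hk, le_rfl]
  · intro k hk
    rw [sum_ite_eq', if_pos hk]
  · intro n hn
    simpa only [ite_mul, zero_mul, sum_ite_eq, if_pos hn] using hw n hn
  · intro n hn
    simpa only [ite_mul, zero_mul, sum_ite_eq, if_pos hn] using hb n hn

/-- For the system with `N = 2` workers (`B_1 = 1, W_1 = 2, B_2 = 2,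
W_2 = 1`) and `K = 2` applications (`b_1 = 1, w_1 = 2, b_2 = 2, w_2 = 1`), the
Nash-equilibrium throughputs are `α^nc_1 = α^nc_2 = 3/4`, the vector `(1,1)` is
feasible, and `(1,1)` is strictly Pareto-superior to the Nash equilibrium; in
particular the Nash equilibrium is not Pareto optimal. -/
theorem stmt_15 :
    let B : ℕ → ℝ := fun n => if n = 1 then 1 else 2
    let W : ℕ → ℝ := fun n => if n = 1 then 2 else 1
    let b : ℕ → ℝ := fun k => if k = 1 then 1 else 2
    let w : ℕ → ℝ := fun k => if k = 1 then 2 else 1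
    let αnc : ℕ → ℝ := fun k => ∑ n ∈ Finset.Icc 1 2, nashRate 2 b w (B n) (W n) k
    (αnc 1 = 3 / 4 ∧ αnc 2 = 3 / 4) ∧
    Feasible 2 2 B W b w (fun _ => 1) ∧
    (∀ k ∈ Finset.Icc 1 2, αnc k < 1) ∧
    (∃ β : ℕ → ℝ, Feasible 2 2 B W b w β ∧
      (∀ k ∈ Finset.Icc 1 2, αnc k ≤ β k) ∧
      (∃ j ∈ Finset.Icc 1 2, αnc j < β j)) := by
  intro B W b w αnc
  have hIcc : Icc 1 2 = ({1, 2} : Finset ℕ) := rfl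
  have hworker1 (k : ℕ) : nashRate 2 b w (B 1) (W 1) k = 1 / (2 * b k) := by
    rw [nashRate_of_comm_bound] <;> norm_num [hIcc, B, W, b, w]
  have hworker2 (k : ℕ) : nashRate 2 b w (B 2) (W 2) k = 1 / (2 * w k) := by
    rw [nashRate_of_comp_bound] <;> norm_num [hIcc, B, W, b, w]
  have hαnc (k : ℕ) : αnc k = 1 / (2 * b k) + 1 / (2 * w k) := by
    simp only [αnc, hIcc, sum_pair (by norm_num : (1 : ℕ) ≠ 2), hworker1, hworker2]
  have hα1 : αnc 1 = 3 / 4 := by norm_num [hαnc, b, w]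
  have hα2 : αnc 2 = 3 / 4 := by norm_num [hαnc, b, w]
  have hfeas : Feasible 2 2 B W b w (fun _ => 1) :=
    feasible_of_fits_own_worker (fun _ _ => zero_le_one)
      (by simp [hIcc, W, w]) (by simp [hIcc, B, b])
  have hlt : ∀ k ∈ Icc 1 2, αnc k < 1 := by
    simp only [hIcc, mem_insert, mem_singleton, forall_eq_or_imp, forall_eq, hα1, hα2]
    norm_num
  exact ⟨⟨hα1, hα2⟩, hfeas, hlt, fun _ => 1, hfeas, fun k hk => (hlt k hk).le,
    1, by simp, hlt 1 (by simp)⟩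
end

section
/- Consider a single worker of computing power W > 0 and K ≥ 2 applications with c_1 < c_2 < ... < c_K, and define the bandwidths B_low = W·K/(Σ_{k=1}^K 1/c_k) and B_high = (W/K)·Σ_{k=1}^K c_k. Then B_low ≤ B_high; when the bandwidth equals B_low the Nash-equilibrium throughput of application k is α^before_k = B_low/(K·b_k) = W/(b_k·Σ_{p=1}^K 1/c_p), and when the bandwidth equals B_high it is α^after_k = W/(K·w_k); and for every application k the ratio satisfies α^before_k / α^after_k = K/(c_k·Σ_{p=1}^K 1/c_p). In particular, the throughput of an application k with K/(c_k·Σ_p 1/c_p) > 1 strictly decreases when the bandwidth is increased from B_low to B_high. -/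
open Finset

/-- Twice the difference of the two sides is `∑ᵢ ∑ⱼ (cᵢ - cⱼ)² / (cᵢ cⱼ)`. -/
theorem card_sq_lt_sum_mul_sum_one_div {ι : Type*} {s : Finset ι} {c : ι → ℝ}
    (hc : ∀ i ∈ s, 0 < c i) {i j : ι} (hi : i ∈ s) (hj : j ∈ s) (hij : c i ≠ c j) :
    (#s : ℝ) ^ 2 < (∑ p ∈ s, c p) * ∑ p ∈ s, 1 / c p := by
  have hterm : ∀ p ∈ s, ∀ q ∈ s,
      (c p - c q) ^ 2 / (c p * c q) = c p * (1 / c q) + c q * (1 / c p) - 2 := by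
    intro p hp q hq
    have := hc p hp; have := hc q hq
    field_simp
    ring
  have hdouble : ∑ p ∈ s, ∑ q ∈ s, (c p - c q) ^ 2 / (c p * c q)
      = 2 * ((∑ p ∈ s, c p) * ∑ p ∈ s, 1 / c p - (#s : ℝ) ^ 2) := by
    rw [sum_congr rfl fun p hp => sum_congr rfl (hterm p hp)]
    simp only [sum_sub_distrib, sum_add_distrib, sum_const, nsmul_eq_mul]
    rw [sum_comm (f := fun p q => c q * (1 / c p)), ← sum_mul_sum]
    ring
  have hpos : 0 < ∑ p ∈ s, ∑ q ∈ s, (c p - c q) ^ 2 / (c p * c q) := by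
    have hnonneg : ∀ p ∈ s, ∀ q ∈ s, 0 ≤ (c p - c q) ^ 2 / (c p * c q) := fun p hp q hq =>
      div_nonneg (sq_nonneg _) (mul_pos (hc p hp) (hc q hq)).le
    have hij' : 0 < (c i - c j) ^ 2 / (c i * c j) :=
      div_pos (pow_two_pos_of_ne_zero (sub_ne_zero.mpr hij)) (mul_pos (hc i hi) (hc j hj))
    refine sum_pos' (fun p hp => sum_nonneg (hnonneg p hp)) ⟨i, hi, ?_⟩
    exact sum_pos' (hnonneg i hi) ⟨j, hj, hij'⟩
  linarith

section nashRate

variable (K : ℕ) (b w : ℕ → ℝ) (Bn Wn : ℝ) (k : ℕ)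

theorem nashRate_of_mul_sum_one_div_le
    (h : Bn / Wn * ∑ j ∈ Icc 1 K, 1 / (b j / w j) ≤ K) :
    nashRate K b w Bn Wn k = Bn / (K * b k) := by
  rw [nashRate, if_pos]
  simpa only [mul_sum, mul_one_div] using h

theorem nashRate_of_lt_mul_sum_one_div_of_sum_div_le
    (h₁ : (K : ℝ) < Bn / Wn * ∑ j ∈ Icc 1 K, 1 / (b j / w j))
    (h₂ : (∑ j ∈ Icc 1 K, b j / w j) / (Bn / Wn) ≤ K) :
    nashRate K b w Bn Wn k = Wn / (K * w k) := by
  rw [nashRate, if_neg, if_pos]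
  · rwa [← sum_div]
  · simpa only [not_le, mul_sum, mul_one_div] using h₁

end nashRate

section singleWorker

variable {K : ℕ} {b w : ℕ → ℝ} {Wn : ℝ} (k : ℕ)

theorem nashRate_at_bandwidth_harmonic (hWn : Wn ≠ 0)
    (hS : 0 < ∑ p ∈ Icc 1 K, 1 / (b p / w p)) :
    nashRate K b w (Wn * K / ∑ p ∈ Icc 1 K, 1 / (b p / w p)) Wn k
      = Wn * K / (∑ p ∈ Icc 1 K, 1 / (b p / w p)) / (K * b k) := by
  refine nashRate_of_mul_sum_one_div_le K b w _ Wn k (le_of_eq ?_)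
  have hC : Wn * K / (∑ p ∈ Icc 1 K, 1 / (b p / w p)) / Wn
      = K / ∑ p ∈ Icc 1 K, 1 / (b p / w p) := by
    field_simp
  rw [hC, div_mul_cancel₀ _ hS.ne']

theorem nashRate_at_bandwidth_arithmetic (hWn : Wn ≠ 0) (hK : K ≠ 0)
    (hT : 0 < ∑ p ∈ Icc 1 K, b p / w p)
    (hST : (K : ℝ) ^ 2 < (∑ p ∈ Icc 1 K, b p / w p) * ∑ p ∈ Icc 1 K, 1 / (b p / w p)) :
    nashRate K b w (Wn / K * ∑ p ∈ Icc 1 K, b p / w p) Wn k = Wn / (K * w k) := by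
  have hKR : (0 : ℝ) < K := by positivity
  have hC : Wn / K * (∑ p ∈ Icc 1 K, b p / w p) / Wn = (∑ p ∈ Icc 1 K, b p / w p) / K := by
    field_simp
  refine nashRate_of_lt_mul_sum_one_div_of_sum_div_le K b w _ Wn k ?_ ?_
  · rw [hC, div_mul_eq_mul_div, lt_div_iff₀ hKR]
    nlinarith
  · rw [hC, div_div_cancel₀ hT.ne']

end singleWorker

/-- On a single worker of power `W > 0` with `K ≥ 2` applications and
`c_1 < ... < c_K`, setting `B_low = W·K/(Σ_k 1/c_k)` and `B_high = (W/K)·Σ_k c_k`,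
we have `B_low ≤ B_high`; at bandwidth `B_low` the Nash throughput of `k` is
`B_low/(K·b_k) = W/(b_k·Σ_p 1/c_p)`, at `B_high` it is `W/(K·w_k)`; the ratio is
`K/(c_k·Σ_p 1/c_p)`; and any application with ratio `> 1` sees its throughput
strictly decrease when the bandwidth is increased from `B_low` to `B_high`. -/
theorem stmt_18 (K : ℕ) (hK : 2 ≤ K) (b w : ℕ → ℝ) (Wn : ℝ) (hWn : 0 < Wn)
    (hb : ∀ k ∈ Finset.Icc 1 K, 0 < b k) (hw : ∀ k ∈ Finset.Icc 1 K, 0 < w k)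
    (hc : ∀ k, 1 ≤ k → k < K → b k / w k < b (k + 1) / w (k + 1)) :
    let Blow : ℝ := Wn * K / (∑ k ∈ Finset.Icc 1 K, 1 / (b k / w k))
    let Bhigh : ℝ := (Wn / K) * ∑ k ∈ Finset.Icc 1 K, b k / w k
    Blow ≤ Bhigh ∧
    (∀ k ∈ Finset.Icc 1 K,
      nashRate K b w Blow Wn k = Blow / (K * b k) ∧
      nashRate K b w Blow Wn k = Wn / (b k * ∑ p ∈ Finset.Icc 1 K, 1 / (b p / w p))) ∧
    (∀ k ∈ Finset.Icc 1 K, nashRate K b w Bhigh Wn k = Wn / (K * w k)) ∧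
    (∀ k ∈ Finset.Icc 1 K,
      nashRate K b w Blow Wn k / nashRate K b w Bhigh Wn k =
        (K : ℝ) / ((b k / w k) * ∑ p ∈ Finset.Icc 1 K, 1 / (b p / w p))) ∧
    (∀ k ∈ Finset.Icc 1 K,
      1 < (K : ℝ) / ((b k / w k) * ∑ p ∈ Finset.Icc 1 K, 1 / (b p / w p)) →
      nashRate K b w Bhigh Wn k < nashRate K b w Blow Wn k) := by
  intro Blow Bhigh
  have hc0 : ∀ p ∈ Icc 1 K, 0 < b p / w p := fun p hp => div_pos (hb p hp) (hw p hp)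
  have h1 : 1 ∈ Icc 1 K := mem_Icc.mpr ⟨le_rfl, by omega⟩
  have h2 : 2 ∈ Icc 1 K := mem_Icc.mpr ⟨by omega, hK⟩
  have hS : 0 < ∑ p ∈ Icc 1 K, 1 / (b p / w p) :=
    sum_pos (fun p hp => one_div_pos.mpr (hc0 p hp)) ⟨1, h1⟩
  have hT : 0 < ∑ p ∈ Icc 1 K, b p / w p := sum_pos hc0 ⟨1, h1⟩
  have hST : (K : ℝ) ^ 2 < (∑ p ∈ Icc 1 K, b p / w p) * ∑ p ∈ Icc 1 K, 1 / (b p / w p) := by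
    simpa using card_sq_lt_sum_mul_sum_one_div hc0 h1 h2 (hc 1 le_rfl hK).ne
  have hlow k : nashRate K b w Blow Wn k = Blow / (K * b k) :=
    nashRate_at_bandwidth_harmonic k hWn.ne' hS
  have hhigh k : nashRate K b w Bhigh Wn k = Wn / (K * w k) :=
    nashRate_at_bandwidth_arithmetic k hWn.ne' (by omega) hT hST
  have hlow' : ∀ k ∈ Icc 1 K,
      nashRate K b w Blow Wn k = Wn / (b k * ∑ p ∈ Icc 1 K, 1 / (b p / w p)) := by
    intro k hk
    rw [hlow]
    show Wn * K / _ / _ = _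
    field_simp
  have hratio : ∀ k ∈ Icc 1 K, nashRate K b w Blow Wn k / nashRate K b w Bhigh Wn k =
      (K : ℝ) / ((b k / w k) * ∑ p ∈ Icc 1 K, 1 / (b p / w p)) := by
    intro k hk
    have := hb k hk; have := hw k hk
    rw [hlow' k hk, hhigh]
    field_simp
  refine ⟨?_, fun k hk => ⟨hlow k, hlow' k hk⟩, fun k _ => hhigh k, hratio, ?_⟩
  · have hKR : (0 : ℝ) < K := by positivity
    show Wn * K / _ ≤ Wn / K * _
    rw [div_le_iff₀ hS, div_mul_eq_mul_div, div_mul_eq_mul_div, le_div_iff₀ hKR]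
    nlinarith
  · intro k hk hgt
    have := hw k hk
    rwa [← hratio k hk, one_lt_div (by rw [hhigh]; positivity)] at hgt
end

section
/- Consider a single worker of computing power W > 0 and K ≥ 2 applications with c_1 < c_2 < ... < c_K, and define B_low = W·K/(Σ_{k=1}^K 1/c_k) and B_high = (W/K)·Σ_{k=1}^K c_k. Let α^before_k = B_low/(K·b_k) and α^after_k = W/(K·w_k) be the Nash-equilibrium throughputs at bandwidths B_low and B_high respectively. Then the ratio of average throughputs satisfies (Σ_{k=1}^K α^before_k)/(Σ_{k=1}^K α^after_k) = (K/Σ_{k=1}^K 1/c_k) · (Σ_{k=1}^K 1/b_k)/(Σ_{k=1}^K 1/w_k). Moreover, this degradation of the average throughput can be made arbitrarily close to K: for w = (1, 1/ε, ..., 1/ε) and b = (1, 1/ε², ..., 1/ε²) with ε > 0, the ratio equals K·(1 + (K−1)·ε²)/(1 + (K−1)·ε)², which tends to K as ε → 0. -/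
open Finset Filter Topology

/- Both Nash throughput vectors are constant multiples of `k ↦ 1 / b k` and `k ↦ 1 / w k`,
so the ratio of their sums factors. In the example every application but the first has
`1 / c_k = ε`, `1 / b_k = ε²` and `1 / w_k = ε`, so all three sums tend to `1` and the ratio
tends to `K`. -/

theorem sum_div_mul_div_sum_div_mul_eq {ι : Type*} (s : Finset ι) (b w : ι → ℝ) (S K : ℝ)
    {W : ℝ} (hW : W ≠ 0) :
    (∑ k ∈ s, (W * K / S) / (K * b k)) / (∑ k ∈ s, W / (K * w k)) =
      (K / S) * ((∑ k ∈ s, 1 / b k) / (∑ k ∈ s, 1 / w k)) := by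
  rcases eq_or_ne K 0 with rfl | hK
  · simp
  have hbefore : ∑ k ∈ s, (W * K / S) / (K * b k) = (W / S) * ∑ k ∈ s, 1 / b k := by
    rw [mul_sum]
    exact sum_congr rfl fun k _ => by field_simp
  have hafter : ∑ k ∈ s, W / (K * w k) = (W / K) * ∑ k ∈ s, 1 / w k := by
    rw [mul_sum]
    exact sum_congr rfl fun k _ => by field_simp
  rw [hbefore, hafter, mul_div_mul_comm]
  congr 1
  field_simp

theorem sum_Icc_one_ite_eq_one {R : Type*} [CommRing R] {K : ℕ} (hK : 1 ≤ K) (a c : R) :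
    ∑ k ∈ Icc 1 K, (if k = 1 then a else c) = a + ((K : R) - 1) * c := by
  have h1 : 1 ∈ Icc 1 K := mem_Icc.2 ⟨le_rfl, hK⟩
  rw [← add_sum_erase _ _ h1, if_pos rfl,
    sum_congr rfl fun k hk => if_neg (ne_of_mem_erase hk), sum_const, card_erase_of_mem h1,
    Nat.card_Icc, nsmul_eq_mul, Nat.add_sub_cancel, Nat.cast_sub hK, Nat.cast_one]

theorem tendsto_mul_div_sq_nhds_zero (K : ℝ) :
    Tendsto (fun ε : ℝ => K * (1 + (K - 1) * ε ^ 2) / (1 + (K - 1) * ε) ^ 2) (𝓝 0) (𝓝 K) := by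
  have hcont : ContinuousAt
      (fun ε : ℝ => K * (1 + (K - 1) * ε ^ 2) / (1 + (K - 1) * ε) ^ 2) 0 :=
    ContinuousAt.div (by fun_prop) (by fun_prop) (by norm_num)
  simpa using hcont.tendsto

theorem stmt_19_general (K : ℕ) (hK : 2 ≤ K) (b w : ℕ → ℝ) (Wn : ℝ) (hWn : 0 < Wn) :
    ((∑ k ∈ Finset.Icc 1 K,
        (Wn * K / (∑ p ∈ Finset.Icc 1 K, 1 / (b p / w p))) / (K * b k)) /
        (∑ k ∈ Finset.Icc 1 K, Wn / (K * w k)) =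
      ((K : ℝ) / ∑ k ∈ Finset.Icc 1 K, 1 / (b k / w k)) *
        ((∑ k ∈ Finset.Icc 1 K, 1 / b k) / (∑ k ∈ Finset.Icc 1 K, 1 / w k))) ∧
    (∀ ε : ℝ, 0 < ε →
      ∀ b' w' : ℕ → ℝ,
        (∀ k, b' k = if k = 1 then 1 else 1 / ε ^ 2) →
        (∀ k, w' k = if k = 1 then 1 else 1 / ε) →
        (∑ k ∈ Finset.Icc 1 K,
            (Wn * K / (∑ p ∈ Finset.Icc 1 K, 1 / (b' p / w' p))) / (K * b' k)) /
            (∑ k ∈ Finset.Icc 1 K, Wn / (K * w' k)) =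
          (K : ℝ) * (1 + (K - 1) * ε ^ 2) / (1 + (K - 1) * ε) ^ 2) ∧
    Filter.Tendsto
      (fun ε : ℝ => (K : ℝ) * (1 + (K - 1) * ε ^ 2) / (1 + (K - 1) * ε) ^ 2)
      (nhdsWithin 0 (Set.Ioi 0)) (nhds (K : ℝ)) := by
  refine ⟨sum_div_mul_div_sum_div_mul_eq _ _ _ _ _ hWn.ne', fun ε hε b' w' hb' hw' => ?_,
    (tendsto_mul_div_sq_nhds_zero K).mono_left nhdsWithin_le_nhds⟩
  have hK1 : 1 ≤ K := by omega
  have hc : ∀ k, 1 / (b' k / w' k) = if k = 1 then 1 else ε := fun k => by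
    rw [hb', hw']; split_ifs <;> field_simp
  have hb'inv : ∀ k, 1 / b' k = if k = 1 then 1 else ε ^ 2 := fun k => by
    rw [hb']; split_ifs <;> simp
  have hw'inv : ∀ k, 1 / w' k = if k = 1 then 1 else ε := fun k => by
    rw [hw']; split_ifs <;> simp
  rw [sum_div_mul_div_sum_div_mul_eq _ _ _ _ _ hWn.ne', sum_congr rfl fun k _ => hc k,
    sum_congr rfl fun k _ => hb'inv k, sum_congr rfl fun k _ => hw'inv k,
    sum_Icc_one_ite_eq_one hK1, sum_Icc_one_ite_eq_one hK1, div_mul_div_comm, ← sq]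

/-- On a single worker of power `W > 0` with `K ≥ 2` applications and
`c_1 < ... < c_K`, with `α^before_k = B_low/(K·b_k)` and `α^after_k = W/(K·w_k)` the
Nash throughputs at bandwidths `B_low = W·K/(Σ 1/c_k)` and `B_high = (W/K)·Σ c_k`,
the ratio of average throughputs is `(K/Σ 1/c_k)·(Σ 1/b_k)/(Σ 1/w_k)`; moreover for
`w = (1,1/ε,...,1/ε)`, `b = (1,1/ε²,...,1/ε²)` this ratio equals
`K·(1+(K−1)ε²)/(1+(K−1)ε)²`, which tends to `K` as `ε → 0⁺`. -/
theorem stmt_19 (K : ℕ) (hK : 2 ≤ K) (b w : ℕ → ℝ) (Wn : ℝ) (hWn : 0 < Wn)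
    (hb : ∀ k ∈ Finset.Icc 1 K, 0 < b k) (hw : ∀ k ∈ Finset.Icc 1 K, 0 < w k)
    (hc : ∀ k, 1 ≤ k → k < K → b k / w k < b (k + 1) / w (k + 1)) :
    ((∑ k ∈ Finset.Icc 1 K,
        (Wn * K / (∑ p ∈ Finset.Icc 1 K, 1 / (b p / w p))) / (K * b k)) /
        (∑ k ∈ Finset.Icc 1 K, Wn / (K * w k)) =
      ((K : ℝ) / ∑ k ∈ Finset.Icc 1 K, 1 / (b k / w k)) *
        ((∑ k ∈ Finset.Icc 1 K, 1 / b k) / (∑ k ∈ Finset.Icc 1 K, 1 / w k))) ∧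
    (∀ ε : ℝ, 0 < ε →
      ∀ b' w' : ℕ → ℝ,
        (∀ k, b' k = if k = 1 then 1 else 1 / ε ^ 2) →
        (∀ k, w' k = if k = 1 then 1 else 1 / ε) →
        (∑ k ∈ Finset.Icc 1 K,
            (Wn * K / (∑ p ∈ Finset.Icc 1 K, 1 / (b' p / w' p))) / (K * b' k)) /
            (∑ k ∈ Finset.Icc 1 K, Wn / (K * w' k)) =
          (K : ℝ) * (1 + (K - 1) * ε ^ 2) / (1 + (K - 1) * ε) ^ 2) ∧
    Filter.Tendsto
      (fun ε : ℝ => (K : ℝ) * (1 + (K - 1) * ε ^ 2) / (1 + (K - 1) * ε) ^ 2)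
      (nhdsWithin 0 (Set.Ioi 0)) (nhds (K : ℝ)) :=
  stmt_19_general K hK b w Wn hWn
end
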